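/- (Stackelberg, interior-minimum case, Case 3 of Theorem 2.) Suppose (ln τ)·(k0 − k1) < 0 and k0 + k1 < 0, and set d* = √(2·(ln τ)·(k0 − k1)/(k0 + k1)) (which is a positive real). Then r is strictly decreasing on (0, d*] and strictly increasing on [d*, ∞); consequently d* is the unique global minimizer of r on (0, ∞). -/

import Mathlib

/-!
Since `Q' = -φ` with `φ` the standard normal density, and completing the square gives
`φ(ζ (± ln τ / d + d / 2)) = φ(0) exp(-(ln τ)² / (2 d²) - d² / 8) τ^(∓1/2)`, the derivative
`r'(d)` is a positive multiple of `2 ln τ (k0 - k1) - (k0 + k1) d² = -(k0 + k1) (d² - d*²)`,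
which has the sign of `d - d*`.
-/

/-- The Gaussian Q-function `Q(x) = (1/√(2π)) ∫_x^∞ exp(−t²/2) dt`. -/
noncomputable def gaussQ (x : ℝ) : ℝ :=
  (Real.sqrt (2 * Real.pi))⁻¹ * ∫ t in Set.Ioi x, Real.exp (-(t ^ 2 / 2))

open MeasureTheory Real Set

lemma integrable_exp_neg_sq_half : Integrable fun t : ℝ => exp (-(t ^ 2 / 2)) := by
  simpa [div_eq_inv_mul] using integrable_exp_neg_mul_sq (by norm_num : (0 : ℝ) < 2⁻¹)

lemma hasDerivAt_gaussQ (x : ℝ) :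
    HasDerivAt gaussQ (-((√(2 * π))⁻¹ * exp (-(x ^ 2 / 2)))) x := by
  have hf := integrable_exp_neg_sq_half.integrableOn (s := Ioi 0)
  have hQ : gaussQ = fun y => (√(2 * π))⁻¹ *
      ((∫ t in Ioi 0, exp (-(t ^ 2 / 2))) - ∫ t in 0..y, exp (-(t ^ 2 / 2))) := by
    funext y
    rw [gaussQ, ← intervalIntegral.integral_interval_add_Ioi hf
      integrable_exp_neg_sq_half.integrableOn, add_sub_cancel_left]
  have hFTC : HasDerivAt (fun y => ∫ t in 0..y, exp (-(t ^ 2 / 2))) (exp (-(x ^ 2 / 2))) x :=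
    (Continuous.integral_hasStrictDerivAt (by fun_prop) 0 x).hasDerivAt
  rw [hQ]
  simpa using ((hasDerivAt_const x _).sub hFTC).const_mul (√(2 * π))⁻¹

lemma exp_neg_sq_half_eq {ζ : ℝ} (hζ : ζ ^ 2 = 1) (L : ℝ) {d : ℝ} (hd : d ≠ 0) :
    exp (-((ζ * (L / d + d / 2)) ^ 2 / 2)) =
      exp (-(L ^ 2 / (2 * d ^ 2) + d ^ 2 / 8)) * exp (-(L / 2)) := by
  rw [← exp_add, mul_pow, hζ, one_mul]
  congr 1
  field_simp
  ring

lemma hasDerivAt_gaussQ_comp {ζ : ℝ} (hζ : ζ ^ 2 = 1) (L : ℝ) {d : ℝ} (hd : d ≠ 0) :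
    HasDerivAt (fun x => gaussQ (ζ * (L / x + x / 2)))
      (-((√(2 * π))⁻¹ * exp (-(L ^ 2 / (2 * d ^ 2) + d ^ 2 / 8))) *
        (ζ * exp (-(L / 2)) * (1 / 2 - L / d ^ 2))) d := by
  have harg : HasDerivAt (fun x => ζ * (L / x + x / 2)) (ζ * (-L / d ^ 2 + 1 / 2)) d := by
    have := (((hasDerivAt_const d L).div (hasDerivAt_id d) hd).add
      ((hasDerivAt_id d).div_const 2)).const_mul ζ
    exact this.congr_deriv (by simp only [id]; ring)
  refine ((hasDerivAt_gaussQ _).comp d harg).congr_deriv ?_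
  rw [exp_neg_sq_half_eq hζ L hd]
  ring

lemma hasDerivAt_bayesRisk {ζ : ℝ} (hζ : ζ ^ 2 = 1) (c a0 a1 L k0 k1 : ℝ)
    (hk0 : k0 = a0 * ζ * exp (-(L / 2))) (hk1 : k1 = a1 * ζ * exp (L / 2)) {d : ℝ} (hd : d ≠ 0) :
    HasDerivAt
      (fun x => c + a0 * gaussQ (ζ * (L / x + x / 2)) + a1 * gaussQ (ζ * (-L / x + x / 2)))
      ((√(2 * π))⁻¹ * exp (-(L ^ 2 / (2 * d ^ 2) + d ^ 2 / 8)) / (2 * d ^ 2) *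
        (2 * L * (k0 - k1) - (k0 + k1) * d ^ 2)) d := by
  have h0 := hasDerivAt_gaussQ_comp hζ L hd
  have h1 := hasDerivAt_gaussQ_comp hζ (-L) hd
  rw [neg_sq, neg_div, neg_neg] at h1
  refine (((hasDerivAt_const d c).add (h0.const_mul a0)).add (h1.const_mul a1)).congr_deriv ?_
  rw [hk0, hk1]
  field_simp
  ring

lemma strictAntiOn_Ioc_and_strictMonoOn_Ici_of_hasDerivAt {f P : ℝ → ℝ} {s : ℝ} (hs : 0 < s)
    (hP : ∀ x, 0 < x → 0 < P x) (hf : ∀ x, 0 < x → HasDerivAt f (P x * (x ^ 2 - s ^ 2)) x) :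
    StrictAntiOn f (Ioc 0 s) ∧ StrictMonoOn f (Ici s) := by
  constructor
  · refine strictAntiOn_of_hasDerivWithinAt_neg (convex_Ioc 0 s)
      (fun x hx => (hf x hx.1).continuousAt.continuousWithinAt)
      (fun x hx => (hf x (interior_subset hx).1).hasDerivWithinAt) ?_
    rw [interior_Ioc]
    exact fun x ⟨hx, hxs⟩ => mul_neg_of_pos_of_neg (hP x hx) (by nlinarith)
  · refine strictMonoOn_of_hasDerivWithinAt_pos (convex_Ici s)
      (fun x hx => (hf x (hs.trans_le hx)).continuousAt.continuousWithinAt)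
      (fun x hx => (hf x (hs.trans_le (interior_subset hx))).hasDerivWithinAt) ?_
    rw [interior_Ici]
    exact fun x hx => mul_pos (hP x (hs.trans hx)) (by nlinarith [mem_Ioi.1 hx])

lemma lt_of_strictAntiOn_Ioc_of_strictMonoOn_Ici {f : ℝ → ℝ} {a s x : ℝ}
    (hanti : StrictAntiOn f (Ioc a s)) (hmono : StrictMonoOn f (Ici s)) (has : a < s)
    (hx : a < x) (hxs : x ≠ s) : f s < f x := by
  rcases hxs.lt_or_gt with h | h
  · exact hanti ⟨hx, h.le⟩ ⟨has, le_rfl⟩ h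
  · exact hmono self_mem_Ici h.le h

theorem stmt_9_general (π0 π1 C00 C01 C10 C11 τ ζ : ℝ)
    (hτ : 0 < τ) (hζ : ζ = 1 ∨ ζ = -1)
    (k0 k1 : ℝ)
    (hk0 : k0 = π0 * ζ * (C10 - C00) * τ ^ (-(1 / 2) : ℝ))
    (hk1 : k1 = π1 * ζ * (C01 - C11) * τ ^ ((1 / 2) : ℝ))
    (r : ℝ → ℝ)
    (hr : r = fun d : ℝ => π0 * C00 + π1 * C11
        + π0 * (C10 - C00) * gaussQ (ζ * (Real.log τ / d + d / 2))
        + π1 * (C01 - C11) * gaussQ (ζ * (-Real.log τ / d + d / 2)))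
    (hcase1 : Real.log τ * (k0 - k1) < 0) (hcase2 : k0 + k1 < 0)
    (dstar : ℝ)
    (hdstar : dstar = Real.sqrt (2 * Real.log τ * (k0 - k1) / (k0 + k1))) :
    0 < dstar ∧
    StrictAntiOn r (Set.Ioc (0 : ℝ) dstar) ∧
    StrictMonoOn r (Set.Ici dstar) ∧
    (∀ d : ℝ, 0 < d → d ≠ dstar → r dstar < r d) := by
  have hζ2 : ζ ^ 2 = 1 := by rcases hζ with rfl | rfl <;> norm_num
  have hsq_pos : 0 < 2 * log τ * (k0 - k1) / (k0 + k1) :=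
    div_pos_of_neg_of_neg (by linarith) hcase2
  have hdstar_pos : 0 < dstar := hdstar ▸ sqrt_pos.2 hsq_pos
  have hdstar_sq : dstar ^ 2 = 2 * log τ * (k0 - k1) / (k0 + k1) := hdstar ▸ sq_sqrt hsq_pos.le
  set P : ℝ → ℝ := fun d =>
    (√(2 * π))⁻¹ * exp (-(log τ ^ 2 / (2 * d ^ 2) + d ^ 2 / 8)) / (2 * d ^ 2) * -(k0 + k1)
  have hP : ∀ d, 0 < d → 0 < P d := fun d hd => mul_pos (by positivity) (by linarith)
  have hderiv : ∀ d, 0 < d → HasDerivAt r (P d * (d ^ 2 - dstar ^ 2)) d := by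
    intro d hd
    rw [hr]
    refine (hasDerivAt_bayesRisk hζ2 _ _ _ _ k0 k1 ?_ ?_ hd.ne').congr_deriv ?_
    · rw [hk0, rpow_def_of_pos hτ]; ring_nf
    · rw [hk1, rpow_def_of_pos hτ]; ring_nf
    · simp only [P, hdstar_sq]
      field_simp [hcase2.ne]
      ring
  obtain ⟨hanti, hmono⟩ :=
    strictAntiOn_Ioc_and_strictMonoOn_Ici_of_hasDerivAt hdstar_pos hP hderiv
  exact ⟨hdstar_pos, hanti, hmono,
    fun d hd hne => lt_of_strictAntiOn_Ioc_of_strictMonoOn_Ici hanti hmono hdstar_pos hd hne⟩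

/-- Stackelberg, interior-minimum case (Case 3 of Theorem 2): if
`(ln τ)·(k0 − k1) < 0` and `k0 + k1 < 0`, the transmitter Bayes risk is strictly
decreasing on `(0, d*]` and strictly increasing on `[d*, ∞)`, where
`d* = √(2·(ln τ)·(k0 − k1)/(k0 + k1))`; hence `d*` is the unique global
minimizer on `(0, ∞)`. -/
theorem stmt_9 (π0 π1 C00 C01 C10 C11 τ ζ : ℝ)
    (hπ0 : 0 < π0) (hπ1 : 0 < π1) (hτ : 0 < τ) (hζ : ζ = 1 ∨ ζ = -1)
    (k0 k1 : ℝ)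
    (hk0 : k0 = π0 * ζ * (C10 - C00) * τ ^ (-(1 / 2) : ℝ))
    (hk1 : k1 = π1 * ζ * (C01 - C11) * τ ^ ((1 / 2) : ℝ))
    (r : ℝ → ℝ)
    (hr : r = fun d : ℝ => π0 * C00 + π1 * C11
        + π0 * (C10 - C00) * gaussQ (ζ * (Real.log τ / d + d / 2))
        + π1 * (C01 - C11) * gaussQ (ζ * (-Real.log τ / d + d / 2)))
    (hcase1 : Real.log τ * (k0 - k1) < 0) (hcase2 : k0 + k1 < 0)
    (dstar : ℝ)
    (hdstar : dstar = Real.sqrt (2 * Real.log τ * (k0 - k1) / (k0 + k1))) :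
    0 < dstar ∧
    StrictAntiOn r (Set.Ioc (0 : ℝ) dstar) ∧
    StrictMonoOn r (Set.Ici dstar) ∧
    (∀ d : ℝ, 0 < d → d ≠ dstar → r dstar < r d) :=
  stmt_9_general π0 π1 C00 C01 C10 C11 τ ζ hτ hζ k0 k1 hk0 hk1 r hr hcase1 hcase2 dstar hdstar
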